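/- arXiv:2102.00384 — 3 statements merged into one kernel-verified Lean document; each statement's English description precedes it below -/
import Mathlib

section
/- Fix π ∈ [−1,1] and constants α > 0, c > 0, ρ > 0. Let Ω be a finite index set with probability weights {p_ω}, let Θ: Ω → [−1,1], and for each ω let μ_ω be a probability measure on [−1,1] with mean Θ(ω). Define Risk(Z) = Σ_ω p_ω ∫ |y − π| · |sgn(Z(ω)) − sgn(y − π)| dμ_ω(y) and MAE(Θ₁,Θ₂) = Σ_ω p_ω |Θ₁(ω) − Θ₂(ω)|. Assume the α-smoothness condition: Σ_{ω: |Θ(ω)−π| ≤ t} p_ω ≤ c·t^α for all 0 ≤ t < ρ. Then there exists a constant C > 0, depending only on α, c and ρ (not on Z), such that for every Θ̄ with the same sign pattern as sgn(Θ − π) and every Z: Ω → ℝ, MAE(sgn Z, sgn Θ̄) ≤ C·[Risk(Z) − Risk(Θ̄)]^{α/(α+1)}. -/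
open MeasureTheory

/-- The sign function: `sgn y = 1` if `y ≥ 0` and `-1` otherwise. -/
noncomputable def sgn (y : ℝ) : ℝ := if 0 ≤ y then 1 else -1

/-- The weighted classification risk at level `π`:
`Risk(Z) = Σ_ω p_ω ∫ |y − π| · |sgn(Z(ω)) − sgn(y − π)| dμ_ω(y)`. -/
noncomputable def Risk {I : Type*} [Fintype I] (p : I → ℝ) (μ : I → Measure ℝ)
    (π : ℝ) (Z : I → ℝ) : ℝ :=
  ∑ ω, p ω * ∫ y, |y - π| * |sgn (Z ω) - sgn (y - π)| ∂(μ ω)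

/-- The mean absolute error `MAE(Θ₁,Θ₂) = Σ_ω p_ω |Θ₁(ω) − Θ₂(ω)|`. -/
noncomputable def MAE {I : Type*} [Fintype I] (p : I → ℝ) (A B : I → ℝ) : ℝ :=
  ∑ ω, p ω * |A ω - B ω|

/-!
Given `ω`, the risk integrand is `|y - π| - sgn (Z ω) * (y - π)`, so the excess risk `E` of `Z`
over `Θ̄` is `∑ p_ω q_ω |Θ(ω) - π|` with `q_ω = |sgn Z(ω) - sgn Θ̄(ω)| ∈ [0, 2]`, while the MAE is
`∑ p_ω q_ω`. Splitting the MAE at a threshold `t`, the indices with margin `|Θ(ω) - π| ≤ t`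
contribute at most `2 c t^α` by smoothness, and the others at most `E / t`. The choice
`t = E^{1/(α+1)}` balances the two terms; when `t ≥ ρ` the trivial bound `MAE ≤ 2` suffices since
then `E^{α/(α+1)} ≥ ρ^α`.
-/

open Finset

lemma sgn_of_nonneg {x : ℝ} (h : 0 ≤ x) : sgn x = 1 := if_pos h

lemma sgn_of_neg {x : ℝ} (h : x < 0) : sgn x = -1 := if_neg (not_le.2 h)

lemma abs_mul_abs_sgn_sub_sgn (a x : ℝ) : |x| * |sgn a - sgn x| = |x| - sgn a * x := by
  rcases le_or_gt 0 x with hx | hx <;> rcases le_or_gt 0 a with ha | ha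
  · simp [sgn_of_nonneg hx, sgn_of_nonneg ha, abs_of_nonneg hx]
  · rw [sgn_of_nonneg hx, sgn_of_neg ha, abs_of_nonneg hx]; norm_num; ring
  · rw [sgn_of_neg hx, sgn_of_nonneg ha, abs_of_neg hx]; norm_num; ring
  · simp [sgn_of_neg hx, sgn_of_neg ha, abs_of_neg hx]

lemma sgn_sub_sgn_mul_of_sgn_eq {a b x : ℝ} (hb : sgn b = sgn x) :
    (sgn b - sgn a) * x = |sgn a - sgn b| * |x| := by
  have ha := abs_mul_abs_sgn_sub_sgn a x
  have hx := abs_mul_abs_sgn_sub_sgn x x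
  rw [sub_self, abs_zero, mul_zero] at hx
  rw [hb]
  linarith

lemma abs_sgn_sub_sgn_le_two (a b : ℝ) : |sgn a - sgn b| ≤ 2 := by
  unfold sgn; split_ifs <;> norm_num

theorem integral_abs_sub_mul_abs_sgn_sub {μ : Measure ℝ} [IsProbabilityMeasure μ]
    (hμ : Integrable id μ) (π a : ℝ) :
    ∫ y, |y - π| * |sgn a - sgn (y - π)| ∂μ
      = (∫ y, |y - π| ∂μ) - sgn a * ((∫ y, y ∂μ) - π) := by
  have hsub : Integrable (fun y => y - π) μ := hμ.sub (integrable_const π)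
  simp_rw [abs_mul_abs_sgn_sub_sgn]
  rw [integral_sub hsub.abs (hsub.const_mul _), integral_const_mul,
    integral_sub (f := fun y => y) hμ (integrable_const π), integral_const, probReal_univ, one_smul]

theorem risk_sub_risk_eq_sum {I : Type*} [Fintype I] (p : I → ℝ) {μ : I → Measure ℝ}
    [∀ ω, IsProbabilityMeasure (μ ω)] (π : ℝ) {Θ Θb : I → ℝ} (Z : I → ℝ)
    (hμ : ∀ ω, Integrable id (μ ω)) (hmean : ∀ ω, ∫ y, y ∂(μ ω) = Θ ω)
    (hsgn : ∀ ω, sgn (Θb ω) = sgn (Θ ω - π)) :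
    Risk p μ π Z - Risk p μ π Θb = ∑ ω, p ω * (|sgn (Z ω) - sgn (Θb ω)| * |Θ ω - π|) := by
  rw [Risk, Risk, ← sum_sub_distrib]
  refine sum_congr rfl fun ω _ => ?_
  rw [integral_abs_sub_mul_abs_sgn_sub (hμ ω), integral_abs_sub_mul_abs_sgn_sub (hμ ω),
    hmean ω, ← mul_sub, ← sgn_sub_sgn_mul_of_sgn_eq (hsgn ω)]
  ring

lemma sum_mul_le_mul_sum {I : Type*} {p q : I → ℝ} {B : ℝ} (hp : ∀ ω, 0 ≤ p ω)
    (hq : ∀ ω, q ω ≤ B) (s : Finset I) :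
    ∑ ω ∈ s, p ω * q ω ≤ B * ∑ ω ∈ s, p ω := by
  rw [mul_sum]
  exact sum_le_sum fun ω _ => by rw [mul_comm B]; exact mul_le_mul_of_nonneg_left (hq ω) (hp ω)

section Margin

variable {I : Type*} [Fintype I] {p q m : I → ℝ} {α c ρ B : ℝ}

def MarginCondition (p m : I → ℝ) (α c ρ : ℝ) : Prop :=
  ∀ t : ℝ, 0 ≤ t → t < ρ → (∑ ω ∈ univ.filter (fun ω => m ω ≤ t), p ω) ≤ c * t ^ α

lemma sum_mul_le_of_marginCondition (hp : ∀ ω, 0 ≤ p ω) (hq : ∀ ω, q ω ≤ B) (hB : 0 ≤ B)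
    (hmargin : MarginCondition p m α c ρ) {t : ℝ} (ht : 0 ≤ t) (htρ : t < ρ) :
    ∑ ω, p ω * q ω ≤ B * (c * t ^ α) + ∑ ω ∈ univ.filter (fun ω => t < m ω), p ω * q ω := by
  rw [← sum_filter_add_sum_filter_not univ (fun ω => m ω ≤ t)]
  simp only [not_le]
  gcongr
  exact (sum_mul_le_mul_sum hp hq _).trans (mul_le_mul_of_nonneg_left (hmargin t ht htρ) hB)

lemma sum_filter_lt_le_rpow (hp : ∀ ω, 0 ≤ p ω) (hq : ∀ ω, 0 ≤ q ω) (hm : ∀ ω, 0 ≤ m ω)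
    (hα : 0 < α) :
    ∑ ω ∈ univ.filter (fun ω => (∑ i, p i * (q i * m i)) ^ (1 / (α + 1)) < m ω), p ω * q ω
      ≤ (∑ i, p i * (q i * m i)) ^ (α / (α + 1)) := by
  set E := ∑ i, p i * (q i * m i)
  have hterm : ∀ i, 0 ≤ p i * (q i * m i) := fun i => mul_nonneg (hp i) (mul_nonneg (hq i) (hm i))
  have hE0 : 0 ≤ E := sum_nonneg fun i _ => hterm i
  rcases hE0.eq_or_lt with hE | hE
  · rw [← hE, Real.zero_rpow (by positivity), Real.zero_rpow (by positivity)]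
    refine (sum_eq_zero fun ω hω => ?_).le
    have hzero := (sum_eq_zero_iff_of_nonneg fun i _ => hterm i).1 hE.symm ω (mem_univ ω)
    rw [← mul_assoc] at hzero
    exact (mul_eq_zero.1 hzero).resolve_right (mem_filter.1 hω).2.ne'
  · set t := E ^ (1 / (α + 1))
    have ht : 0 < t := Real.rpow_pos_of_pos hE _
    have hEt : E ^ (α / (α + 1)) = E / t := by
      rw [show α / (α + 1) = 1 - 1 / (α + 1) by field_simp; ring, Real.rpow_sub hE,
        Real.rpow_one]
    rw [hEt, le_div_iff₀ ht, sum_mul]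
    calc ∑ ω ∈ univ.filter (fun ω => t < m ω), p ω * q ω * t
        ≤ ∑ ω ∈ univ.filter (fun ω => t < m ω), p ω * (q ω * m ω) :=
          sum_le_sum fun ω hω => by
            rw [← mul_assoc]
            exact mul_le_mul_of_nonneg_left (mem_filter.1 hω).2.le
              (mul_nonneg (hp ω) (hq ω))
      _ ≤ E := sum_le_sum_of_subset_of_nonneg (filter_subset _ _) fun i _ _ => hterm i

lemma sum_mul_le_rpow_of_marginCondition (hp : ∀ ω, 0 ≤ p ω) (hp1 : ∑ ω, p ω ≤ 1)
    (hq : ∀ ω, q ω ∈ Set.Icc 0 B) (hB : 0 ≤ B) (hm : ∀ ω, 0 ≤ m ω) (hα : 0 < α) (hc : 0 ≤ c)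
    (hρ : 0 < ρ) (hmargin : MarginCondition p m α c ρ) :
    ∑ ω, p ω * q ω ≤ (B * c + 1 + B * ρ ^ (-α)) * (∑ ω, p ω * (q ω * m ω)) ^ (α / (α + 1)) := by
  set E := ∑ ω, p ω * (q ω * m ω)
  set t := E ^ (1 / (α + 1))
  have hE0 : 0 ≤ E := sum_nonneg fun ω _ => mul_nonneg (hp ω) (mul_nonneg (hq ω).1 (hm ω))
  have hEβ : 0 ≤ E ^ (α / (α + 1)) := Real.rpow_nonneg hE0 _
  have htα : t ^ α = E ^ (α / (α + 1)) := by
    rw [← Real.rpow_mul hE0]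
    congr 1
    field_simp
  have hBρ : 0 ≤ B * ρ ^ (-α) := mul_nonneg hB (Real.rpow_nonneg hρ.le _)
  rcases lt_or_ge t ρ with htρ | hρt
  · have htail := sum_filter_lt_le_rpow hp (fun ω => (hq ω).1) hm hα
    calc ∑ ω, p ω * q ω
        ≤ B * (c * t ^ α) + ∑ ω ∈ univ.filter (fun ω => t < m ω), p ω * q ω :=
          sum_mul_le_of_marginCondition hp (fun ω => (hq ω).2) hB hmargin
            (Real.rpow_nonneg hE0 _) htρ
      _ ≤ (B * c + 1) * E ^ (α / (α + 1)) := by rw [htα]; linarith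
      _ ≤ (B * c + 1 + B * ρ ^ (-α)) * E ^ (α / (α + 1)) := by nlinarith
  · have hρα : ρ ^ α ≤ E ^ (α / (α + 1)) := htα ▸ Real.rpow_le_rpow hρ.le hρt hα.le
    calc ∑ ω, p ω * q ω
        ≤ B := (sum_mul_le_mul_sum hp (fun ω => (hq ω).2) univ).trans
          (mul_le_of_le_one_right hB hp1)
      _ = B * ρ ^ (-α) * ρ ^ α := by rw [mul_assoc, ← Real.rpow_add hρ, neg_add_cancel,
          Real.rpow_zero, mul_one]
      _ ≤ B * ρ ^ (-α) * E ^ (α / (α + 1)) := mul_le_mul_of_nonneg_left hρα hBρ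
      _ ≤ (B * c + 1 + B * ρ ^ (-α)) * E ^ (α / (α + 1)) := by
          nlinarith [mul_nonneg (mul_nonneg hB hc) hEβ]

end Margin

/-- Theorem: identifiability: under the `α`-smoothness condition at level
`π` there is a constant `C > 0`, depending only on `α`, `c` and `ρ`, such that
`MAE(sgn Z, sgn Θ̄) ≤ C·[Risk(Z) − Risk(Θ̄)]^{α/(α+1)}` for every `Θ̄` sign-equivalent to
`sgn(Θ − π)` and every tensor `Z`. -/
theorem stmt4 (α c ρ : ℝ) (hα : 0 < α) (hc : 0 < c) (hρ : 0 < ρ) :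
    ∃ C : ℝ, 0 < C ∧
      ∀ (π : ℝ), π ∈ Set.Icc (-1 : ℝ) 1 →
      ∀ (I : Type) [Fintype I],
      ∀ (p Θ : I → ℝ) (μ : I → Measure ℝ),
        (∀ ω, 0 ≤ p ω) → (∑ ω, p ω) = 1 →
        (∀ ω, Θ ω ∈ Set.Icc (-1 : ℝ) 1) →
        (∀ ω, IsProbabilityMeasure (μ ω)) →
        (∀ ω, μ ω (Set.Icc (-1 : ℝ) 1)ᶜ = 0) →
        (∀ ω, (∫ y, y ∂(μ ω)) = Θ ω) →
        (∀ t : ℝ, 0 ≤ t → t < ρ →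
          (∑ ω ∈ Finset.univ.filter (fun ω => |Θ ω - π| ≤ t), p ω) ≤ c * t ^ α) →
        ∀ Θb Z : I → ℝ, (∀ ω, sgn (Θb ω) = sgn (Θ ω - π)) →
          MAE p (fun ω => sgn (Z ω)) (fun ω => sgn (Θb ω))
            ≤ C * (Risk p μ π Z - Risk p μ π Θb) ^ (α / (α + 1)) := by
  refine ⟨2 * c + 1 + 2 * ρ ^ (-α), by positivity, ?_⟩
  intro π _ I _ p Θ μ hp hp1 _ hprob hsupp hmean hmargin Θb Z hsgn
  have hμ : ∀ ω, Integrable id (μ ω) := fun ω =>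
    Integrable.of_mem_Icc (-1) 1 aemeasurable_id (mem_ae_iff.2 (hsupp ω))
  rw [risk_sub_risk_eq_sum p π Z hμ hmean hsgn]
  exact sum_mul_le_rpow_of_marginCondition hp hp1.le
    (fun ω => ⟨abs_nonneg _, abs_sgn_sub_sgn_le_two _ _⟩) zero_le_two (fun ω => abs_nonneg _)
    hα hc.le hρ hmargin
end

section
/- Fix π ∈ [−1,1] and constants α > 0, c > 0, ρ > 0. Let Ω be a finite index set with probability weights {p_ω}, let Θ: Ω → [−1,1], and for each ω let μ_ω be a probability measure on [−1,1] with mean Θ(ω). Define Risk(Z) = Σ_ω p_ω ∫ |y − π| · |sgn(Z(ω)) − sgn(y − π)| dμ_ω(y) and MAE(Θ₁,Θ₂) = Σ_ω p_ω |Θ₁(ω) − Θ₂(ω)|. Assume Σ_{ω: |Θ(ω)−π| ≤ t} p_ω ≤ c·t^α for all 0 ≤ t < ρ. Then for Θ̄ = sgn(Θ − π), every Z: Ω → ℝ, and every t with 0 ≤ t < ρ, Risk(Z) − Risk(Θ̄) ≥ t·( MAE(sgn Z, sgn Θ̄) − 2c·t^α ). -/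
/-!
For `s = ±1` one has `|x| · |s - sgn x| = |x| - s x`, so after integrating against `μ_ω` the
risk depends on `μ_ω` only through `∫ |y - π|` and the mean `Θ ω`; hence
`Risk(Z) - Risk(Θ̄) = Σ_ω p_ω |Θ ω - π| · |sgn Z ω - Θ̄ ω|`.
Each summand is at least `t · |sgn Z ω - Θ̄ ω|` unless `|Θ ω - π| ≤ t`, in which case the loss is
at most `2t p_ω`, and the smoothness assumption bounds the total mass of those `ω` by `c t^α`.
-/

open MeasureTheory

lemma sgn_eq_one_or_neg_one (y : ℝ) : sgn y = 1 ∨ sgn y = -1 := by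
  unfold sgn; split_ifs <;> simp

lemma sgn_sgn (y : ℝ) : sgn (sgn y) = sgn y := by
  rcases sgn_eq_one_or_neg_one y with h | h <;> rw [h] <;> norm_num [sgn]

lemma sgn_mul_self (x : ℝ) : sgn x * x = |x| := by
  unfold sgn; split_ifs with h
  · rw [abs_of_nonneg h, one_mul]
  · rw [abs_of_neg (not_le.mp h), neg_one_mul]

lemma abs_mul_abs_sub_sgn {s : ℝ} (hs : s = 1 ∨ s = -1) (x : ℝ) :
    |x| * |s - sgn x| = |x| - s * x := by
  have hx := sgn_mul_self x
  rcases sgn_eq_one_or_neg_one x with h | h <;> rw [h] at hx ⊢ <;>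
    rcases hs with rfl | rfl <;> norm_num <;> linarith

lemma abs_sub_sgn_le_two {s : ℝ} (hs : s = 1 ∨ s = -1) (x : ℝ) : |s - sgn x| ≤ 2 := by
  rcases sgn_eq_one_or_neg_one x with h | h <;> rcases hs with rfl | rfl <;> norm_num [h]

lemma measurable_sgn : Measurable sgn :=
  Measurable.ite measurableSet_Ici measurable_const measurable_const

lemma integrable_id_of_measure_compl_Icc_eq_zero {μ : Measure ℝ} [IsFiniteMeasure μ] {a b : ℝ}
    (h : μ (Set.Icc a b)ᶜ = 0) : Integrable (fun y : ℝ => y) μ := by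
  refine Integrable.mono' (integrable_const (max |a| |b|))
    measurable_id.aestronglyMeasurable ?_
  filter_upwards [measure_eq_zero_iff_ae_notMem.mp h] with y hy
  rw [Set.notMem_compl_iff] at hy
  exact abs_le_max_abs_abs hy.1 hy.2

lemma integral_abs_mul_abs_sub_sgn {μ : Measure ℝ} [IsProbabilityMeasure μ]
    (hμ : Integrable (fun y : ℝ => y) μ) (π : ℝ) {s : ℝ} (hs : s = 1 ∨ s = -1) :
    ∫ y, |y - π| * |s - sgn (y - π)| ∂μ = (∫ y, |y - π| ∂μ) - s * ((∫ y, y ∂μ) - π) := by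
  have hshift : Integrable (fun y => y - π) μ := hμ.sub (integrable_const π)
  simp_rw [abs_mul_abs_sub_sgn hs]
  rw [integral_sub hshift.abs (hshift.const_mul s), integral_const_mul,
    integral_sub hμ (integrable_const π), integral_const, probReal_univ, one_smul]

lemma risk_sub_risk_sgn {Ω : Type*} [Fintype Ω] (p : Ω → ℝ) (μ : Ω → Measure ℝ)
    [∀ ω, IsProbabilityMeasure (μ ω)] (hμ : ∀ ω, Integrable (fun y : ℝ => y) (μ ω))
    (π : ℝ) (Θ : Ω → ℝ) (hmean : ∀ ω, (∫ y, y ∂(μ ω)) = Θ ω) (Z : Ω → ℝ) :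
    Risk p μ π Z - Risk p μ π (fun ω => sgn (Θ ω - π))
      = ∑ ω, p ω * (|Θ ω - π| * |sgn (Z ω) - sgn (Θ ω - π)|) := by
  unfold Risk
  rw [← Finset.sum_sub_distrib]
  refine Finset.sum_congr rfl fun ω _ => ?_
  rw [← mul_sub, sgn_sgn,
    integral_abs_mul_abs_sub_sgn (hμ ω) π (sgn_eq_one_or_neg_one _),
    integral_abs_mul_abs_sub_sgn (hμ ω) π (sgn_eq_one_or_neg_one _), hmean,
    abs_mul_abs_sub_sgn (sgn_eq_one_or_neg_one _), sgn_mul_self]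
  ring

lemma mul_sum_le_sum_abs_mul_add_filter {ι : Type*} [Fintype ι] (p d x : ι → ℝ) {t : ℝ}
    (hp : ∀ i, 0 ≤ p i) (hd0 : ∀ i, 0 ≤ d i) (hd2 : ∀ i, d i ≤ 2) (ht : 0 ≤ t) :
    t * ∑ i, p i * d i
      ≤ ∑ i, p i * (|x i| * d i) + 2 * t * ∑ i ∈ Finset.univ.filter (fun i => |x i| ≤ t), p i := by
  rw [Finset.sum_filter, Finset.mul_sum, Finset.mul_sum, ← Finset.sum_add_distrib]
  refine Finset.sum_le_sum fun i _ => ?_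
  have hpd : 0 ≤ p i * d i := mul_nonneg (hp i) (hd0 i)
  split_ifs with hx
  · nlinarith [mul_nonneg hpd (abs_nonneg (x i)), mul_le_mul_of_nonneg_left (hd2 i) (hp i)]
  · nlinarith [mul_le_mul_of_nonneg_left (not_le.mp hx).le hpd]

theorem stmt6_general {Ω : Type*} [Fintype Ω] (π : ℝ)
    (α c ρ : ℝ)
    (p : Ω → ℝ) (hp0 : ∀ ω, 0 ≤ p ω)
    (Θ : Ω → ℝ)
    (μ : Ω → Measure ℝ)
    (hμ : ∀ ω, IsProbabilityMeasure (μ ω))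
    (hsupp : ∀ ω, μ ω (Set.Icc (-1 : ℝ) 1)ᶜ = 0)
    (hmean : ∀ ω, (∫ y, y ∂(μ ω)) = Θ ω)
    (hsmooth : ∀ t : ℝ, 0 ≤ t → t < ρ →
      (∑ ω ∈ Finset.univ.filter (fun ω => |Θ ω - π| ≤ t), p ω) ≤ c * t ^ α)
    (Z : Ω → ℝ) (t : ℝ) (ht0 : 0 ≤ t) (htρ : t < ρ) :
    t * (MAE p (fun ω => sgn (Z ω)) (fun ω => sgn (sgn (Θ ω - π))) - 2 * c * t ^ α)
      ≤ Risk p μ π Z - Risk p μ π (fun ω => sgn (Θ ω - π)) := by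
  have hint ω := integrable_id_of_measure_compl_Icc_eq_zero (hsupp ω)
  have hmargin := mul_sum_le_sum_abs_mul_add_filter p
    (fun ω => |sgn (Z ω) - sgn (Θ ω - π)|) (fun ω => Θ ω - π) hp0 (fun _ => abs_nonneg _)
    (fun _ => abs_sub_sgn_le_two (sgn_eq_one_or_neg_one _) _) ht0
  rw [risk_sub_risk_sgn p μ hint π Θ hmean Z]
  simp only [MAE, sgn_sgn]
  calc _ = t * ∑ ω, p ω * |sgn (Z ω) - sgn (Θ ω - π)| - 2 * t * (c * t ^ α) := by ring
    _ ≤ t * ∑ ω, p ω * |sgn (Z ω) - sgn (Θ ω - π)|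
          - 2 * t * ∑ ω ∈ Finset.univ.filter (fun ω => |Θ ω - π| ≤ t), p ω := by
        gcongr; exact hsmooth t ht0 htρ
    _ ≤ _ := by linarith

/-- under `α`-smoothness at level `π`, for `Θ̄ = sgn(Θ − π)`, every tensor
`Z` and every `0 ≤ t < ρ`,
`Risk(Z) − Risk(Θ̄) ≥ t·(MAE(sgn Z, sgn Θ̄) − 2c·t^α)`. -/
theorem stmt6 {Ω : Type*} [Fintype Ω] (π : ℝ) (hπ : π ∈ Set.Icc (-1 : ℝ) 1)
    (α c ρ : ℝ) (hα : 0 < α) (hc : 0 < c) (hρ : 0 < ρ)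
    (p : Ω → ℝ) (hp0 : ∀ ω, 0 ≤ p ω) (hp1 : ∑ ω, p ω = 1)
    (Θ : Ω → ℝ) (hΘ : ∀ ω, Θ ω ∈ Set.Icc (-1 : ℝ) 1)
    (μ : Ω → Measure ℝ)
    (hμ : ∀ ω, IsProbabilityMeasure (μ ω))
    (hsupp : ∀ ω, μ ω (Set.Icc (-1 : ℝ) 1)ᶜ = 0)
    (hmean : ∀ ω, (∫ y, y ∂(μ ω)) = Θ ω)
    (hsmooth : ∀ t : ℝ, 0 ≤ t → t < ρ →
      (∑ ω ∈ Finset.univ.filter (fun ω => |Θ ω - π| ≤ t), p ω) ≤ c * t ^ α)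
    (Z : Ω → ℝ) (t : ℝ) (ht0 : 0 ≤ t) (htρ : t < ρ) :
    t * (MAE p (fun ω => sgn (Z ω)) (fun ω => sgn (sgn (Θ ω - π))) - 2 * c * t ^ α)
      ≤ Risk p μ π Z - Risk p μ π (fun ω => sgn (Θ ω - π)) :=
  stmt6_general π α c ρ p hp0 Θ μ hμ hsupp hmean hsmooth Z t ht0 htρ
end

section
/- Let H ≥ 1 be an integer and let Π = {h/H : h ∈ ℤ, −H ≤ h ≤ H} be the level grid. Let Ω be a finite index set with probability weights {p_ω}, let Θ: Ω → [−1,1] be a tensor, and for each π ∈ Π let Ẑ_π: Ω → ℝ be an arbitrary tensor. Define the estimate Θ̂ = (1/(2H+1)) Σ_{π∈Π} sgn(Ẑ_π) (entrywise) and MAE(Θ₁,Θ₂) = Σ_ω p_ω |Θ₁(ω) − Θ₂(ω)|. Then MAE(Θ̂, Θ) ≤ (1/(2H+1)) Σ_{π∈Π} MAE(sgn Ẑ_π, sgn(Θ − π)) + 1/H. -/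
open Finset

lemma sgn_sub_intCast_div {H : ℝ} (hH : 0 < H) (θ : ℝ) (h : ℤ) :
    sgn (θ - h / H) = if h ≤ ⌊θ * H⌋ then 1 else -1 := by
  simp only [sgn, sub_nonneg, div_le_iff₀ hH, Int.le_floor]

lemma sum_Icc_ite_le (a b k : ℤ) (hak : a ≤ k + 1) (hkb : k ≤ b) :
    ∑ h ∈ Icc a b, (if h ≤ k then (1 : ℝ) else -1) = 2 * k + 1 - a - b := by
  have hle : (Icc a b).filter (· ≤ k) = Icc a k := by
    ext h; simp only [mem_filter, mem_Icc]; omega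
  have hgt : (Icc a b).filter (fun h => ¬h ≤ k) = Ioc k b := by
    ext h; simp only [mem_filter, mem_Icc, mem_Ioc]; omega
  rw [sum_ite, hle, hgt, sum_const, sum_const, Int.card_Icc, Int.card_Ioc]
  have h1 : (((k + 1 - a).toNat : ℤ) : ℝ) = k + 1 - a := by
    rw [Int.toNat_of_nonneg (by omega)]; push_cast; ring
  have h2 : (((b - k).toNat : ℤ) : ℝ) = b - k := by
    rw [Int.toNat_of_nonneg (by omega)]; push_cast; ring
  simp only [nsmul_eq_mul, mul_one, mul_neg, Int.cast_natCast] at h1 h2 ⊢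
  rw [h1, h2]; ring

lemma sum_sgn_sub_grid (H : ℕ) (hH : 1 ≤ H) {θ : ℝ} (hθ : θ ∈ Set.Icc (-1 : ℝ) 1) :
    ∑ h ∈ Icc (-(H : ℤ)) H, sgn (θ - h / H) = 2 * ⌊θ * H⌋ + 1 := by
  have hHpos : (0 : ℝ) < H := by exact_mod_cast hH
  have hlow : -(H : ℤ) ≤ ⌊θ * H⌋ := Int.le_floor.2 (by push_cast; nlinarith [hθ.1])
  have hupp : ⌊θ * H⌋ ≤ H := Int.floor_le_iff.2 (by push_cast; nlinarith [hθ.2])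
  simp_rw [sgn_sub_intCast_div hHpos]
  rw [sum_Icc_ite_le _ _ _ (by omega) hupp]
  push_cast; ring

lemma abs_grid_average_sgn_sub_le (H : ℕ) (hH : 1 ≤ H) {θ : ℝ} (hθ : θ ∈ Set.Icc (-1 : ℝ) 1) :
    |1 / (2 * (H : ℝ) + 1) * ∑ h ∈ Icc (-(H : ℤ)) H, sgn (θ - h / H) - θ| ≤ 1 / H := by
  rw [sum_sgn_sub_grid H hH hθ]
  have hk1 : (⌊θ * H⌋ : ℝ) ≤ θ * H := Int.floor_le _
  have hk2 : θ * H < ⌊θ * H⌋ + 1 := Int.lt_floor_add_one _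
  rw [abs_le, one_div_mul_eq_div, div_sub' (by positivity),
    div_le_div_iff₀ (by positivity) (by positivity), neg_le, neg_div',
    div_le_div_iff₀ (by positivity) (by positivity)]
  -- with `k = ⌊θH⌋`: `(2k+1)H - θ(2H+1)H = 2H(k - θH) + (H - θH) ∈ (-2H, 2H]`
  constructor <;> nlinarith [hθ.1, hθ.2]

lemma abs_mul_sum_sub_le {ι : Type*} (s : Finset ι) {c : ℝ} (hc : 0 ≤ c) (a b : ι → ℝ) (θ : ℝ) :
    |c * ∑ i ∈ s, a i - θ| ≤ c * ∑ i ∈ s, |a i - b i| + |c * ∑ i ∈ s, b i - θ| :=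
  calc |c * ∑ i ∈ s, a i - θ| ≤ |c * ∑ i ∈ s, (a i - b i)| + |c * ∑ i ∈ s, b i - θ| := by
        rw [sum_sub_distrib, mul_sub]; exact abs_sub_le _ (c * ∑ i ∈ s, b i) _
    _ ≤ c * ∑ i ∈ s, |a i - b i| + |c * ∑ i ∈ s, b i - θ| := by
        rw [abs_mul, abs_of_nonneg hc]; gcongr; exact abs_sum_le_sum_abs _ _

lemma MAE_le_mul_sum_MAE_add {I ι : Type*} [Fintype I] {p : I → ℝ} (hp0 : ∀ ω, 0 ≤ p ω)
    (hp1 : ∑ ω, p ω = 1) (s : Finset ι) (c ε : ℝ) {A B : I → ℝ} (F G : ι → I → ℝ)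
    (hAB : ∀ ω, |A ω - B ω| ≤ c * ∑ i ∈ s, |F i ω - G i ω| + ε) :
    MAE p A B ≤ c * ∑ i ∈ s, MAE p (F i) (G i) + ε :=
  calc MAE p A B ≤ ∑ ω, p ω * (c * ∑ i ∈ s, |F i ω - G i ω| + ε) :=
        sum_le_sum fun ω _ => mul_le_mul_of_nonneg_left (hAB ω) (hp0 ω)
    _ = c * ∑ i ∈ s, MAE p (F i) (G i) + ε := by
        simp only [MAE, mul_add, sum_add_distrib, ← sum_mul, hp1, one_mul, mul_sum]
        rw [sum_comm]; congr 1; refine sum_congr rfl fun i _ => sum_congr rfl fun ω _ => ?_; ring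

/-- for the sign-series estimate
`Θ̂ = (1/(2H+1)) Σ_{π ∈ Π} sgn(Ẑ_π)` over the level grid `Π = {h/H : −H ≤ h ≤ H}`,
`MAE(Θ̂, Θ) ≤ (1/(2H+1)) Σ_{π ∈ Π} MAE(sgn Ẑ_π, sgn(Θ − π)) + 1/H`. -/
theorem stmt18 {Ω : Type*} [Fintype Ω] (H : ℕ) (hH : 1 ≤ H)
    (p : Ω → ℝ) (hp0 : ∀ ω, 0 ≤ p ω) (hp1 : ∑ ω, p ω = 1)
    (Θ : Ω → ℝ) (hΘ : ∀ ω, Θ ω ∈ Set.Icc (-1 : ℝ) 1)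
    (Zhat : ℤ → Ω → ℝ) (Θhat : Ω → ℝ)
    (hΘhat : ∀ ω, Θhat ω = (1 / (2 * (H : ℝ) + 1)) *
      ∑ h ∈ Finset.Icc (-(H : ℤ)) (H : ℤ), sgn (Zhat h ω)) :
    MAE p Θhat Θ ≤
      (1 / (2 * (H : ℝ) + 1)) *
        (∑ h ∈ Finset.Icc (-(H : ℤ)) (H : ℤ),
          MAE p (fun ω => sgn (Zhat h ω)) (fun ω => sgn (Θ ω - (h : ℝ) / (H : ℝ))))
      + 1 / (H : ℝ) := by
  refine MAE_le_mul_sum_MAE_add hp0 hp1 _ _ _ _ _ fun ω => ?_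
  rw [hΘhat]
  exact (abs_mul_sum_sub_le _ (by positivity) _ _ _).trans
    (add_le_add_right (abs_grid_average_sgn_sub_le H hH (hΘ ω)) _)
end
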